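/- arXiv:2509.18791 — 6 statements merged into one kernel-verified Lean document; each statement's English description precedes it below -/
import Mathlib

section
/- Let g : ℝ → ℝ be 1-Lipschitz with g(x) ≥ |x| for all x ∈ ℝ, and let n ∈ ℕ. Let P be the set of functions H : ℤ → ℤ such that |H(c+1) - H(c)| = 1, H(c) ≡ c + 1 (mod 2), and H(c) + 1 ≤ (n+1)·g(c/(n+1)) for all c ∈ ℤ. Then P is nonempty and has a greatest element H* with respect to the pointwise order (i.e. H* ∈ P and H(c) ≤ H*(c) for every H ∈ P and c ∈ ℤ), and this greatest element satisfies 0 ≤ (n+1)·g(c/(n+1)) - (H*(c) + 1) ≤ 2 for all c ∈ ℤ. -/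
/-!
The greatest element is forced pointwise: `H*(c)` must be the largest integer
`≤ (n+1)·g(c/(n+1)) - 1` of parity `c + 1`, which lies within 2 of that bound.
Since `c ↦ (n+1)·g(c/(n+1))` moves by at most 1 per step, consecutive values of `H*`
differ by less than 3, and having opposite parities they differ by exactly 1.
-/

noncomputable def floorParity (r : ℤ) (x : ℝ) : ℤ := ⌊x⌋ - (⌊x⌋ - r) % 2

section floorParity

variable (r : ℤ) (x : ℝ)

theorem floorParity_emod_two : floorParity r x % 2 = r % 2 := by
  unfold floorParity; omega

theorem floorParity_le : (floorParity r x : ℝ) ≤ x := by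
  have h : floorParity r x ≤ ⌊x⌋ := by unfold floorParity; omega
  exact (Int.cast_le.2 h).trans (Int.floor_le x)

theorem sub_two_lt_floorParity : x - 2 < floorParity r x := by
  have h : ⌊x⌋ - 1 ≤ floorParity r x := by unfold floorParity; omega
  have h' : ((⌊x⌋ - 1 : ℤ) : ℝ) ≤ floorParity r x := Int.cast_le.2 h
  push_cast at h'
  linarith [Int.lt_floor_add_one x]

variable {r x}

theorem le_floorParity {m : ℤ} (hm : (m : ℝ) ≤ x) (hpar : m % 2 = r % 2) :
    m ≤ floorParity r x := by
  have h := Int.le_floor.2 hm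
  unfold floorParity; omega

theorem abs_floorParity_succ_sub_floorParity {y : ℝ} (hxy : |x - y| ≤ 1) :
    |floorParity (r + 1) x - floorParity r y| = 1 := by
  have hx₁ := floorParity_le (r + 1) x
  have hx₂ := sub_two_lt_floorParity (r + 1) x
  have hy₁ := floorParity_le r y
  have hy₂ := sub_two_lt_floorParity r y
  obtain ⟨hlo, hhi⟩ := abs_le.1 hxy
  have hlt : ((floorParity (r + 1) x - floorParity r y : ℤ) : ℝ) < 3 := by push_cast; linarith
  have hgt : (-3 : ℝ) < ((floorParity (r + 1) x - floorParity r y : ℤ) : ℝ) := by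
    push_cast; linarith
  have hlt' : floorParity (r + 1) x - floorParity r y < 3 := by exact_mod_cast hlt
  have hgt' : -3 < floorParity (r + 1) x - floorParity r y := by exact_mod_cast hgt
  have hpx := floorParity_emod_two (r + 1) x
  have hpy := floorParity_emod_two r y
  rcases (by omega : floorParity (r + 1) x - floorParity r y = 1 ∨
      floorParity (r + 1) x - floorParity r y = -1) with h | h <;> simp [h]

end floorParity

theorem abs_mul_comp_div_sub_le {g : ℝ → ℝ} (hlip : ∀ x y : ℝ, |g x - g y| ≤ |x - y|)
    {s : ℝ} (hs : 0 < s) (x y : ℝ) : |s * g (x / s) - s * g (y / s)| ≤ |x - y| :=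
  calc |s * g (x / s) - s * g (y / s)| = s * |g (x / s) - g (y / s)| := by
        rw [← mul_sub, abs_mul, abs_of_pos hs]
    _ ≤ s * |x / s - y / s| := mul_le_mul_of_nonneg_left (hlip _ _) hs.le
    _ = |x - y| := by rw [← sub_div, abs_div, abs_of_pos hs, mul_div_cancel₀ _ hs.ne']

theorem stmt_3_general (g : ℝ → ℝ)
    (hlip : ∀ x y : ℝ, |g x - g y| ≤ |x - y|)
    (n : ℕ) :
    let P : Set (ℤ → ℤ) := {H | (∀ c : ℤ, |H (c + 1) - H c| = 1) ∧
      (∀ c : ℤ, H c % 2 = (c + 1) % 2) ∧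
      (∀ c : ℤ, ((H c : ℝ) + 1) ≤ (n + 1) * g ((c : ℝ) / (n + 1)))}
    ∃ Hstar ∈ P, (∀ H ∈ P, ∀ c : ℤ, H c ≤ Hstar c) ∧
      (∀ c : ℤ, 0 ≤ (n + 1 : ℝ) * g ((c : ℝ) / (n + 1)) - ((Hstar c : ℝ) + 1) ∧
        (n + 1 : ℝ) * g ((c : ℝ) / (n + 1)) - ((Hstar c : ℝ) + 1) ≤ 2) := by
  intro P
  set F : ℤ → ℝ := fun c => (n + 1 : ℝ) * g ((c : ℝ) / (n + 1))
  have hstep (c : ℤ) : |(F (c + 1) - 1) - (F c - 1)| ≤ 1 := by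
    have h := abs_mul_comp_div_sub_le hlip (by positivity : (0 : ℝ) < n + 1) (c + 1) c
    simpa [F] using h
  refine ⟨fun c => floorParity (c + 1) (F c - 1),
    ⟨fun c => abs_floorParity_succ_sub_floorParity (hstep c),
      fun c => floorParity_emod_two _ _,
      fun c => by linarith [floorParity_le (c + 1) (F c - 1)]⟩, ?_, ?_⟩
  · rintro H ⟨-, hpar, hle⟩ c
    exact le_floorParity (by linarith [hle c]) (hpar c)
  · intro c
    have hle := floorParity_le (c + 1) (F c - 1)
    have hgt := sub_two_lt_floorParity (c + 1) (F c - 1)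
    constructor <;> linarith

/-- Given a 1-Lipschitz profile `g ≥ |·|`, the set of up-down paths with parity
`H(c) ≡ c + 1 (mod 2)` lying below `(n+1)·g` (in the sense `H(c) + 1 ≤ (n+1)·g(c/(n+1))`)
is nonempty, has a greatest element `H*`, and `H*` approximates `(n+1)·g` within
an additive error of 2. -/
theorem stmt_3 (g : ℝ → ℝ)
    (hlip : ∀ x y : ℝ, |g x - g y| ≤ |x - y|)
    (hg : ∀ x : ℝ, |x| ≤ g x) (n : ℕ) :
    let P : Set (ℤ → ℤ) := {H | (∀ c : ℤ, |H (c + 1) - H c| = 1) ∧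
      (∀ c : ℤ, H c % 2 = (c + 1) % 2) ∧
      (∀ c : ℤ, ((H c : ℝ) + 1) ≤ (n + 1) * g ((c : ℝ) / (n + 1)))}
    ∃ Hstar ∈ P, (∀ H ∈ P, ∀ c : ℤ, H c ≤ Hstar c) ∧
      (∀ c : ℤ, 0 ≤ (n + 1 : ℝ) * g ((c : ℝ) / (n + 1)) - ((Hstar c : ℝ) + 1) ∧
        (n + 1 : ℝ) * g ((c : ℝ) / (n + 1)) - ((Hstar c : ℝ) + 1) ≤ 2) :=
  stmt_3_general g hlip n
end

section
/- Let x, y, φ ∈ ℝ with φ > 0 and 2(x² + y²) < φ². Then φ - x - y > 0, and the complex number ξ := ((y - x) + i·√(φ² - 2(x² + y²))) / (φ - x - y) satisfies Im ξ > 0 and (φ + x + y)/ξ - (φ - x + y)/(ξ + 1) - (φ + x - y)/(ξ - 1) = 0. Moreover, for any z ∈ ℂ with z ∉ {0, 1, -1}, the equation (φ + x + y)/z - (φ - x + y)/(z + 1) - (φ + x - y)/(z - 1) = 0 holds if and only if z = ξ or z = conj(ξ). -/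
open Complex

/-!
Clearing denominators turns the critical-point equation into the real quadratic
`(φ - x - y) z² - 2(y - x) z + (φ + x + y) = 0`, whose discriminant `4(2(x² + y²) - φ²)` is
negative in the liquid region. Its roots are therefore the conjugate pair `ξ`, `conj ξ`, and
`ξ` avoids the poles `0, ±1` because it is not real.
-/

theorem div_sub_div_add_one_sub_div_sub_one {K : Type*} [Field K] {z : K} (h₀ : z ≠ 0)
    (h₁ : z + 1 ≠ 0) (h₂ : z - 1 ≠ 0) (a b c : K) :
    a / z - b / (z + 1) - c / (z - 1) =
      ((a - b - c) * z ^ 2 + (b - c) * z - a) / (z * (z + 1) * (z - 1)) := by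
  field_simp
  ring

namespace Complex

theorem quadratic_eq_zero_iff_eq_or_eq_conj {p q r s : ℝ} (hp : p ≠ 0)
    (hr : r ^ 2 = p * s - q ^ 2) (z : ℂ) :
    (p : ℂ) * z ^ 2 - 2 * q * z + s = 0 ↔
      z = (q + I * r) / p ∨ z = starRingEnd ℂ ((q + I * r) / p) := by
  have hpC : (p : ℂ) ≠ 0 := ofReal_ne_zero.2 hp
  have hrC : (r : ℂ) ^ 2 = p * s - q ^ 2 := by exact_mod_cast hr
  have hdisc : discrim (p : ℂ) (-2 * q) s = (2 * I * r) * (2 * I * r) := by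
    rw [discrim]
    linear_combination 4 * hrC - 4 * (r : ℂ) ^ 2 * I_sq
  have hconj : starRingEnd ℂ ((q + I * r) / p) = (q - I * r) / p := by
    simp only [map_div₀, map_add, map_mul, conj_ofReal, conj_I]
    ring
  rw [show (p : ℂ) * z ^ 2 - 2 * q * z + s = p * (z * z) + (-2 * q) * z + s by ring,
    quadratic_eq_zero_iff hpC hdisc, hconj]
  congr! 2 <;> field_simp

end Complex

theorem sub_sub_pos_of_two_mul_sq_add_sq_lt_sq {x y φ : ℝ} (hφ : 0 < φ)
    (h : 2 * (x ^ 2 + y ^ 2) < φ ^ 2) : 0 < φ - x - y := by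
  nlinarith [sq_nonneg (x - y), sq_nonneg (x + y + φ)]

/-- In the liquid region `2(x² + y²) < φ²` (with `φ > 0`), one has `φ - x - y > 0`,
the point `ξ = ((y - x) + i√(φ² - 2(x² + y²)))/(φ - x - y)` lies in the upper
half-plane, it is a critical point of the modified action, and the only critical
points in `ℂ \ {0, 1, -1}` are `ξ` and its conjugate. -/
theorem stmt_6 (x y φ : ℝ) (hφ : 0 < φ) (h : 2 * (x ^ 2 + y ^ 2) < φ ^ 2) :
    0 < φ - x - y ∧
    (let ξ : ℂ := (((y - x : ℝ) : ℂ) +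
        Complex.I * ((Real.sqrt (φ ^ 2 - 2 * (x ^ 2 + y ^ 2)) : ℝ) : ℂ)) /
        ((φ - x - y : ℝ) : ℂ)
     0 < ξ.im ∧
     ((φ + x + y : ℝ) : ℂ) / ξ - ((φ - x + y : ℝ) : ℂ) / (ξ + 1) -
        ((φ + x - y : ℝ) : ℂ) / (ξ - 1) = 0 ∧
     ∀ z : ℂ, z ≠ 0 → z ≠ 1 → z ≠ -1 →
       (((φ + x + y : ℝ) : ℂ) / z - ((φ - x + y : ℝ) : ℂ) / (z + 1) -
          ((φ + x - y : ℝ) : ℂ) / (z - 1) = 0 ↔ z = ξ ∨ z = starRingEnd ℂ ξ)) := by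
  have hp := sub_sub_pos_of_two_mul_sq_add_sq_lt_sq hφ h
  have hD : 0 < φ ^ 2 - 2 * (x ^ 2 + y ^ 2) := by linarith
  have hr : Real.sqrt (φ ^ 2 - 2 * (x ^ 2 + y ^ 2)) ^ 2 =
      (φ - x - y) * (φ + x + y) - (y - x) ^ 2 := by
    rw [Real.sq_sqrt hD.le]
    ring
  refine ⟨hp, ?_⟩
  intro ξ
  have him : 0 < ξ.im := by
    rw [div_ofReal_im]
    simpa using div_pos (Real.sqrt_pos.2 hD) hp
  have hcrit : ∀ z : ℂ, z ≠ 0 → z ≠ 1 → z ≠ -1 →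
      (((φ + x + y : ℝ) : ℂ) / z - ((φ - x + y : ℝ) : ℂ) / (z + 1) -
          ((φ + x - y : ℝ) : ℂ) / (z - 1) = 0 ↔ z = ξ ∨ z = starRingEnd ℂ ξ) := by
    intro z h₀ h₁ hneg
    have h₁' : z + 1 ≠ 0 := fun hz => hneg (eq_neg_of_add_eq_zero_left hz)
    have h₂' : z - 1 ≠ 0 := sub_ne_zero.2 h₁
    have hnum : ((φ + x + y : ℝ) - (φ - x + y : ℝ) - (φ + x - y : ℝ) : ℂ) * z ^ 2 +
        ((φ - x + y : ℝ) - (φ + x - y : ℝ) : ℂ) * z - (φ + x + y : ℝ) =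
        -((φ - x - y : ℝ) * z ^ 2 - 2 * (y - x : ℝ) * z + (φ + x + y : ℝ)) := by
      push_cast
      ring
    rw [div_sub_div_add_one_sub_div_sub_one h₀ h₁' h₂', div_eq_zero_iff,
      or_iff_left (mul_ne_zero (mul_ne_zero h₀ h₁') h₂'), hnum, neg_eq_zero,
      quadratic_eq_zero_iff_eq_or_eq_conj hp.ne' hr]
  have hξ_ne : ∀ w : ℂ, w.im = 0 → ξ ≠ w := fun w hw hξw => him.ne' (hξw ▸ hw)
  exact ⟨him, (hcrit ξ (hξ_ne 0 zero_im) (hξ_ne 1 one_im) (hξ_ne (-1) (by simp))).2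
    (Or.inl rfl), hcrit⟩
end

section
/- Let x, y, φ ∈ ℝ with φ > 0 and 2(x² + y²) < φ², and let ξ := ((y - x) + i·√(φ² - 2(x² + y²))) / (φ - x - y). Then (φ + x + y)/ξ² - (φ - x + y)/(ξ + 1)² - (φ + x - y)/(ξ - 1)² ≠ 0; that is, the second derivative of the modified action does not vanish at the critical point ξ. -/
/-!
Write `a, b, c` for the three coefficients and `Q(z) = (b + c - a) z² - (b - c) z + a`, so that
`a/z - b/(z+1) - c/(z-1) = -Q(z) / (z (z+1) (z-1))` and the critical points are the roots of `Q`.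
At a root of `Q` the expression of the theorem therefore equals `Q'(z) / (z (z+1) (z-1))`.
Here `Q(z) = d z² - 2 w z + a` with `d = φ - x - y`, `w = y - x` and discriminant
`4 (w² - a d) = -4 s²`, `s = √(φ² - 2(x² + y²)) > 0`; so `ξ = (w + i s) / d` is a simple root,
`Q'(ξ) = 2 i s ≠ 0`, and `ξ ∉ ℝ` keeps the denominator away from zero.
-/

open Complex

theorem div_sq_sub_div_sq_sub_div_sq_of_quadratic_eq_zero {K : Type*} [Field K] {a b c z : K}
    (hz : z ≠ 0) (hz₁ : z + 1 ≠ 0) (hz₂ : z - 1 ≠ 0)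
    (hQ : (b + c - a) * z ^ 2 - (b - c) * z + a = 0) :
    a / z ^ 2 - b / (z + 1) ^ 2 - c / (z - 1) ^ 2 =
      (2 * (b + c - a) * z - (b - c)) / (z * (z + 1) * (z - 1)) := by
  field_simp
  linear_combination (1 - 3 * z ^ 2) * hQ

theorem Complex.ne_ofReal_of_im_ne_zero {z : ℂ} (hz : z.im ≠ 0) (r : ℝ) : z ≠ r :=
  fun h ↦ hz (by simp [h])

theorem quadratic_eq_zero_of_mul_eq_add_I_mul {a d w s : ℝ} {z : ℂ} (hd : d ≠ 0)
    (hz : d * z = w + I * s) (h : a * d = w ^ 2 + s ^ 2) :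
    d * z ^ 2 - 2 * w * z + a = 0 := by
  have h' : (a : ℂ) * d = w ^ 2 + s ^ 2 := by exact_mod_cast h
  refine (mul_eq_zero.mp ?_).resolve_left (ofReal_ne_zero.mpr hd)
  linear_combination (d * z + w + I * s - 2 * w) * hz + h' + s ^ 2 * I_sq

theorem stmt_9_general (x y φ : ℝ) (h : 2 * (x ^ 2 + y ^ 2) < φ ^ 2) :
    let ξ : ℂ := (((y - x : ℝ) : ℂ) +
        Complex.I * ((Real.sqrt (φ ^ 2 - 2 * (x ^ 2 + y ^ 2)) : ℝ) : ℂ)) /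
        ((φ - x - y : ℝ) : ℂ)
    ((φ + x + y : ℝ) : ℂ) / ξ ^ 2 - ((φ - x + y : ℝ) : ℂ) / (ξ + 1) ^ 2 -
      ((φ + x - y : ℝ) : ℂ) / (ξ - 1) ^ 2 ≠ 0 := by
  intro ξ
  set s := Real.sqrt (φ ^ 2 - 2 * (x ^ 2 + y ^ 2))
  have hs : s ≠ 0 := (Real.sqrt_pos.mpr (by linarith)).ne'
  have hs₂ : s ^ 2 = φ ^ 2 - 2 * (x ^ 2 + y ^ 2) := Real.sq_sqrt (by linarith)
  have hd : φ - x - y ≠ 0 := by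
    intro hd
    obtain rfl : φ = x + y := by linarith
    nlinarith [sq_nonneg (x - y)]
  have hdξ : ((φ - x - y : ℝ) : ℂ) * ξ = (y - x : ℝ) + I * s :=
    mul_div_cancel₀ _ (ofReal_ne_zero.mpr hd)
  have hQ := quadratic_eq_zero_of_mul_eq_add_I_mul (a := φ + x + y) hd hdξ
    (by linear_combination -hs₂)
  have him : ξ.im ≠ 0 := by
    have : (φ - x - y) * ξ.im = s := by simpa using congrArg im hdξ
    exact right_ne_zero_of_mul (this ▸ hs)
  have hξ₀ : ξ ≠ 0 := by simpa using ne_ofReal_of_im_ne_zero him 0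
  have hξ₁ : ξ + 1 ≠ 0 := by
    simpa [add_eq_zero_iff_eq_neg] using ne_ofReal_of_im_ne_zero him (-1)
  have hξ₂ : ξ - 1 ≠ 0 := sub_ne_zero.mpr (by simpa using ne_ofReal_of_im_ne_zero him 1)
  have hd' : ((φ - x + y : ℝ) : ℂ) + (φ + x - y : ℝ) - (φ + x + y : ℝ) = (φ - x - y : ℝ) := by
    push_cast; ring
  have hw : ((φ - x + y : ℝ) : ℂ) - (φ + x - y : ℝ) = 2 * (y - x : ℝ) := by
    push_cast; ring
  rw [div_sq_sub_div_sq_sub_div_sq_of_quadratic_eq_zero hξ₀ hξ₁ hξ₂ (by rw [hd', hw]; exact hQ),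
    hd', hw, mul_assoc, hdξ]
  refine div_ne_zero ?_ (mul_ne_zero (mul_ne_zero hξ₀ hξ₁) hξ₂)
  rw [show (2 : ℂ) * ((y - x : ℝ) + I * s) - 2 * (y - x : ℝ) = 2 * I * s by ring]
  exact mul_ne_zero (mul_ne_zero two_ne_zero I_ne_zero) (ofReal_ne_zero.mpr hs)

/-- In the liquid region, the second derivative of the modified action does not
vanish at the upper half-plane critical point `ξ`. -/
theorem stmt_9 (x y φ : ℝ) (hφ : 0 < φ) (h : 2 * (x ^ 2 + y ^ 2) < φ ^ 2) :
    let ξ : ℂ := (((y - x : ℝ) : ℂ) +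
        Complex.I * ((Real.sqrt (φ ^ 2 - 2 * (x ^ 2 + y ^ 2)) : ℝ) : ℂ)) /
        ((φ - x - y : ℝ) : ℂ)
    ((φ + x + y : ℝ) : ℂ) / ξ ^ 2 - ((φ - x + y : ℝ) : ℂ) / (ξ + 1) ^ 2 -
      ((φ + x - y : ℝ) : ℂ) / (ξ - 1) ^ 2 ≠ 0 :=
  stmt_9_general x y φ h
end

section
/- Let ξ ∈ ℂ with Im ξ > 0 and let α, β, γ ∈ ℂ with |α| = |β| = |γ| = 1. Set g₁ = (ξ - i)/(ξ(ξ - 1)), g₂ = (ξ̄ - i)/(ξ̄(ξ̄ - 1)), h₁ = (ξ - i)/(ξ(ξ - 1)(ξ + 1)), h₂ = (ξ̄ - i)/(ξ̄(ξ̄ - 1)(ξ̄ + 1)), where ξ̄ = conj(ξ), and define E := α·g₁·h₁ + β·γ·g₂·h₁ - conj(β)·conj(γ)·g₁·h₂ - conj(α)·g₂·h₂. Then (|ξ̄ - i| - |ξ - i|)² / (|ξ|²·|ξ - 1|²·|ξ + 1|) ≤ |E| ≤ (|ξ̄ - i| + |ξ - i|)² / (|ξ|²·|ξ - 1|²·|ξ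 + 1|); in particular, since |ξ - i| < |ξ̄ - i| when Im ξ > 0, E ≠ 0. -/
/-!
Since `|α| = |β| = |γ| = 1`, the expression factors as
`E = (α g₁ + βγ g₂) (h₁ - conj (αβγ) h₂)`. Each factor is a sum of two terms of prescribed
moduli, so by the triangle inequality its modulus lies between the difference and the sum
of those moduli; multiplying the two ranges gives the bounds. The lower bound is positive
because `ξ` is strictly closer to `i` than `conj ξ` is.
-/

open Complex ComplexConjugate

section UnitCoefficients

variable {𝕜 : Type*} [NormedDivisionRing 𝕜] {u v : 𝕜}

lemma norm_mul_add_mul_le (hu : ‖u‖ = 1) (hv : ‖v‖ = 1) (x y : 𝕜) :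
    ‖u * x + v * y‖ ≤ ‖x‖ + ‖y‖ := by
  simpa only [norm_mul, hu, hv, one_mul] using norm_add_le (u * x) (v * y)

lemma abs_norm_sub_norm_le_norm_mul_add_mul (hu : ‖u‖ = 1) (hv : ‖v‖ = 1) (x y : 𝕜) :
    |‖x‖ - ‖y‖| ≤ ‖u * x + v * y‖ := by
  simpa only [norm_neg, norm_mul, hu, hv, one_mul, sub_neg_eq_add]
    using abs_norm_sub_norm_le (u * x) (-(v * y))

end UnitCoefficients

def edgeLeadingTerm (u v x y x' y' : ℂ) : ℂ :=
  u * x * x' + v * y * x' - conj v * x * y' - conj u * y * y'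

section EdgeLeadingTerm

variable {u v : ℂ} (x y x' y' : ℂ)

-- The `1 * x'` puts the second factor in the shape `u * x + v * y` of the bounds above.
lemma edgeLeadingTerm_eq_mul (hu : ‖u‖ = 1) (hv : ‖v‖ = 1) :
    edgeLeadingTerm u v x y x' y' = (u * x + v * y) * (1 * x' + -conj (u * v) * y') := by
  have hu' : u * conj u = 1 := by rw [mul_conj', hu]; norm_num
  have hv' : v * conj v = 1 := by rw [mul_conj', hv]; norm_num
  rw [edgeLeadingTerm, map_mul]
  linear_combination (x * y' * conj v) * hu' + (y * y' * conj u) * hv'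

lemma norm_edgeLeadingTerm_mem_Icc (hu : ‖u‖ = 1) (hv : ‖v‖ = 1) :
    ‖edgeLeadingTerm u v x y x' y'‖ ∈
      Set.Icc (|‖x‖ - ‖y‖| * |‖x'‖ - ‖y'‖|) ((‖x‖ + ‖y‖) * (‖x'‖ + ‖y'‖)) := by
  have huv : ‖-conj (u * v)‖ = 1 := by rw [norm_neg, norm_conj, norm_mul, hu, hv, one_mul]
  rw [edgeLeadingTerm_eq_mul x y x' y' hu hv, norm_mul]
  exact ⟨mul_le_mul (abs_norm_sub_norm_le_norm_mul_add_mul hu hv x y)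
      (abs_norm_sub_norm_le_norm_mul_add_mul norm_one huv x' y')
      (abs_nonneg _) (norm_nonneg _),
    mul_le_mul (norm_mul_add_mul_le hu hv x y) (norm_mul_add_mul_le norm_one huv x' y')
      (norm_nonneg _) (by positivity)⟩

end EdgeLeadingTerm

lemma norm_sub_lt_norm_conj_sub {z w : ℂ} (hz : 0 < z.im) (hw : 0 < w.im) :
    ‖z - w‖ < ‖conj z - w‖ := by
  have hsq : ‖z - w‖ ^ 2 < ‖conj z - w‖ ^ 2 := by
    simp only [Complex.sq_norm, normSq_apply, sub_re, sub_im, conj_re, conj_im]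
    nlinarith [mul_pos hz hw]
  exact lt_of_pow_lt_pow_left₀ 2 (norm_nonneg _) hsq

lemma sub_ofReal_ne_zero {z : ℂ} (hz : z.im ≠ 0) (c : ℝ) : z - c ≠ 0 :=
  fun h => hz (by simp [sub_eq_zero.mp h])

/-- Two-sided bound on the leading-order edge-length expression `E` for an edge of
type `(1,0)`, with `G_{1,0}(w) = 1/(w-1)` and `H_{1,0}(z) = 1/z`; in particular
`E ≠ 0`. -/
theorem stmt_11 (ξ α β γ : ℂ) (hξ : 0 < ξ.im)
    (hα : ‖α‖ = 1) (hβ : ‖β‖ = 1) (hγ : ‖γ‖ = 1) :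
    let ξb : ℂ := starRingEnd ℂ ξ
    let g₁ : ℂ := (ξ - Complex.I) / (ξ * (ξ - 1))
    let g₂ : ℂ := (ξb - Complex.I) / (ξb * (ξb - 1))
    let h₁ : ℂ := (ξ - Complex.I) / (ξ * (ξ - 1) * (ξ + 1))
    let h₂ : ℂ := (ξb - Complex.I) / (ξb * (ξb - 1) * (ξb + 1))
    let E : ℂ := α * g₁ * h₁ + β * γ * g₂ * h₁ -
        (starRingEnd ℂ β) * (starRingEnd ℂ γ) * g₁ * h₂ - (starRingEnd ℂ α) * g₂ * h₂
    (‖ξb - Complex.I‖ - ‖ξ - Complex.I‖) ^ 2 /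
        ((‖ξ‖) ^ 2 * (‖ξ - 1‖) ^ 2 * ‖ξ + 1‖) ≤
        ‖E‖ ∧
      ‖E‖ ≤
        (‖ξb - Complex.I‖ + ‖ξ - Complex.I‖) ^ 2 /
          ((‖ξ‖) ^ 2 * (‖ξ - 1‖) ^ 2 * ‖ξ + 1‖) ∧
      E ≠ 0 := by
  intro ξb g₁ g₂ h₁ h₂ E
  have hβγ : ‖β * γ‖ = 1 := by rw [norm_mul, hβ, hγ, one_mul]
  have hE : E = edgeLeadingTerm α (β * γ) g₁ g₂ h₁ h₂ := by
    simp only [E, edgeLeadingTerm, map_mul]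
  obtain ⟨hlower, hupper⟩ := hE ▸ norm_edgeLeadingTerm_mem_Icc g₁ g₂ h₁ h₂ hα hβγ
  have hp : ‖ξb‖ = ‖ξ‖ := norm_conj ξ
  have hq : ‖ξb - 1‖ = ‖ξ - 1‖ := by rw [← norm_conj (ξ - 1), map_sub, map_one]
  have hr : ‖ξb + 1‖ = ‖ξ + 1‖ := by rw [← norm_conj (ξ + 1), map_add, map_one]
  set A := ‖ξ - I‖
  set B := ‖ξb - I‖
  set p := ‖ξ‖
  set q := ‖ξ - 1‖
  set r := ‖ξ + 1‖
  have hg₁ : ‖g₁‖ = A / (p * q) := by simp only [g₁, norm_div, norm_mul]; rfl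
  have hg₂ : ‖g₂‖ = B / (p * q) := by simp only [g₂, norm_div, norm_mul, hp, hq]; rfl
  have hh₁ : ‖h₁‖ = A / (p * q * r) := by simp only [h₁, norm_div, norm_mul]; rfl
  have hh₂ : ‖h₂‖ = B / (p * q * r) := by
    simp only [h₂, norm_div, norm_mul, hp, hq, hr]; rfl
  rw [hg₁, hg₂, hh₁, hh₂, ← abs_mul] at hlower
  rw [hg₁, hg₂, hh₁, hh₂] at hupper
  have hsq : (A / (p * q) - B / (p * q)) * (A / (p * q * r) - B / (p * q * r)) =
      (B - A) ^ 2 / (p ^ 2 * q ^ 2 * r) := by ring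
  rw [hsq, abs_of_nonneg (by positivity)] at hlower
  refine ⟨hlower, hupper.trans_eq (by ring), ?_⟩
  have hAB : A < B := norm_sub_lt_norm_conj_sub hξ (by simp)
  have hpos : 0 < (B - A) ^ 2 / (p ^ 2 * q ^ 2 * r) := by
    have : 0 < B - A := sub_pos.mpr hAB
    have : 0 < p := norm_pos_iff.mpr (by simpa using sub_ofReal_ne_zero hξ.ne' 0)
    have : 0 < q := norm_pos_iff.mpr (by simpa using sub_ofReal_ne_zero hξ.ne' 1)
    have : 0 < r := norm_pos_iff.mpr (by simpa using sub_ofReal_ne_zero hξ.ne' (-1))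
    positivity
  exact norm_ne_zero_iff.mp (hpos.trans_le hlower).ne'
end

section
/- Let ξ ∈ ℂ with Im ξ > 0 and let α, β, γ ∈ ℂ with |α| = |β| = |γ| = 1. Set g₁ = 2(ξ - i)/(ξ(ξ - 1)), g₂ = 2(ξ̄ - i)/(ξ̄(ξ̄ - 1)), h₁ = (ξ - i)/((ξ - 1)(ξ + 1)²), h₂ = (ξ̄ - i)/((ξ̄ - 1)(ξ̄ + 1)²), where ξ̄ = conj(ξ), and define E := α·g₁·h₁ + β·γ·g₂·h₁ - conj(β)·conj(γ)·g₁·h₂ - conj(α)·g₂·h₂. Then 2(|ξ̄ - i| - |ξ - i|)² / (|ξ|·|ξ - 1|²·|ξ + 1|²) ≤ |E| ≤ 2(|ξ̄ - i| + |ξ - i|)² / (|ξ|·|ξ - 1|²·|ξ + 1|²); in particular E ≠ 0. -/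
open Complex ComplexConjugate

/-!
Since `α, β, γ` are unimodular, `E` factors as
`(α g₁ + β γ g₂) (h₁ - ᾱ β̄ γ̄ h₂)`. In each factor the two summands have moduli proportional
to `‖ξ - i‖` and `‖ξ̄ - i‖` with the same constant, so the triangle inequality bounds the
modulus of each factor between that constant times `‖ξ̄ - i‖ ∓ ‖ξ - i‖`. The lower bound is
positive because a point of the upper half-plane is strictly closer to `i` than to `-i`.
-/

theorem add_sub_sub_eq_mul_of_mul_eq_one {R : Type*} [CommRing R] {a a' b b' c c' : R}
    (ha : a * a' = 1) (hb : b * b' = 1) (hc : c * c' = 1) (g₁ g₂ h₁ h₂ : R) :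
    a * g₁ * h₁ + b * c * g₂ * h₁ - b' * c' * g₁ * h₂ - a' * g₂ * h₂ =
      (a * g₁ + b * c * g₂) * (h₁ - a' * b' * c' * h₂) := by
  linear_combination (b' * c' * g₁ * h₂) * ha + (a' * b * b' * g₂ * h₂) * hc +
    (a' * g₂ * h₂) * hb

section NormedDivisionRing

variable {𝕜 : Type*} [NormedDivisionRing 𝕜]

theorem norm_add_mul_sub_mem_Icc (x y u w : 𝕜) :
    ‖(x + y) * (u - w)‖ ∈
      Set.Icc (|‖x‖ - ‖y‖| * |‖u‖ - ‖w‖|) ((‖x‖ + ‖y‖) * (‖u‖ + ‖w‖)) := by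
  have hxy : |‖x‖ - ‖y‖| ≤ ‖x + y‖ := by simpa using abs_norm_sub_norm_le x (-y)
  rw [norm_mul]
  exact ⟨mul_le_mul hxy (abs_norm_sub_norm_le u w) (abs_nonneg _) (norm_nonneg _),
    mul_le_mul (norm_add_le x y) (norm_sub_le u w) (norm_nonneg _) (by positivity)⟩

theorem norm_add_mul_sub_mem_Icc_of_norm_eq {x y u w : 𝕜} {K L r s : ℝ} (hK : 0 ≤ K)
    (hL : 0 ≤ L) (hx : ‖x‖ = K * r) (hy : ‖y‖ = K * s) (hu : ‖u‖ = L * r)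
    (hw : ‖w‖ = L * s) :
    ‖(x + y) * (u - w)‖ ∈ Set.Icc (K * L * (s - r) ^ 2) (K * L * (s + r) ^ 2) := by
  have h := norm_add_mul_sub_mem_Icc x y u w
  rwa [hx, hy, hu, hw, ← abs_mul, show (K * r - K * s) * (L * r - L * s) = K * L * (s - r) ^ 2
    by ring, abs_of_nonneg (by positivity), show (K * r + K * s) * (L * r + L * s) =
    K * L * (s + r) ^ 2 by ring] at h

end NormedDivisionRing

namespace Complex

theorem mul_conj_eq_one_of_norm_eq_one {z : ℂ} (hz : ‖z‖ = 1) : z * conj z = 1 := by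
  rw [mul_conj, normSq_eq_norm_sq, hz]
  norm_num

theorem norm_sub_I_lt_norm_conj_sub_I {ξ : ℂ} (hξ : 0 < ξ.im) : ‖ξ - I‖ < ‖conj ξ - I‖ := by
  have hconj : ‖conj ξ - I‖ = ‖ξ + I‖ := by
    rw [← norm_conj, map_sub, conj_conj, conj_I, sub_neg_eq_add]
  rw [hconj, ← sq_lt_sq₀ (norm_nonneg _) (norm_nonneg _), Complex.sq_norm, Complex.sq_norm,
    normSq_apply, normSq_apply]
  simp only [sub_re, sub_im, add_re, add_im, I_re, I_im]
  nlinarith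

theorem norm_pos_of_im_pos {z : ℂ} (hz : 0 < z.im) : 0 < ‖z‖ :=
  hz.trans_le (im_le_norm z)

end Complex

/-- Two-sided bound on the leading-order edge-length expression `E` for an edge
between two adjacent hexagonal faces (type `(1,-1)`), with `G_{1,-1}(w) = 2/(w-1)`
and `H_{1,-1}(z) = 1/(z+1)`; in particular `E ≠ 0`. -/
theorem stmt_12 (ξ α β γ : ℂ) (hξ : 0 < ξ.im)
    (hα : ‖α‖ = 1) (hβ : ‖β‖ = 1) (hγ : ‖γ‖ = 1) :
    let ξb : ℂ := starRingEnd ℂ ξ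
    let g₁ : ℂ := 2 * (ξ - Complex.I) / (ξ * (ξ - 1))
    let g₂ : ℂ := 2 * (ξb - Complex.I) / (ξb * (ξb - 1))
    let h₁ : ℂ := (ξ - Complex.I) / ((ξ - 1) * (ξ + 1) ^ 2)
    let h₂ : ℂ := (ξb - Complex.I) / ((ξb - 1) * (ξb + 1) ^ 2)
    let E : ℂ := α * g₁ * h₁ + β * γ * g₂ * h₁ -
        (starRingEnd ℂ β) * (starRingEnd ℂ γ) * g₁ * h₂ - (starRingEnd ℂ α) * g₂ * h₂
    2 * (‖ξb - Complex.I‖ - ‖ξ - Complex.I‖) ^ 2 /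
        (‖ξ‖ * (‖ξ - 1‖) ^ 2 * (‖ξ + 1‖) ^ 2) ≤
        ‖E‖ ∧
      ‖E‖ ≤
        2 * (‖ξb - Complex.I‖ + ‖ξ - Complex.I‖) ^ 2 /
          (‖ξ‖ * (‖ξ - 1‖) ^ 2 * (‖ξ + 1‖) ^ 2) ∧
      E ≠ 0 := by
  intro ξb g₁ g₂ h₁ h₂ E
  have hfac : E = (α * g₁ + β * γ * g₂) * (h₁ - conj α * conj β * conj γ * h₂) :=
    add_sub_sub_eq_mul_of_mul_eq_one (mul_conj_eq_one_of_norm_eq_one hα)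
      (mul_conj_eq_one_of_norm_eq_one hβ) (mul_conj_eq_one_of_norm_eq_one hγ) g₁ g₂ h₁ h₂
  have hsub : ‖conj ξ - 1‖ = ‖ξ - 1‖ := by rw [← norm_conj, map_sub, conj_conj, map_one]
  have hadd : ‖conj ξ + 1‖ = ‖ξ + 1‖ := by rw [← norm_conj, map_add, conj_conj, map_one]
  have hbounds : ‖E‖ ∈ Set.Icc
      (2 / (‖ξ‖ * ‖ξ - 1‖) * (1 / (‖ξ - 1‖ * ‖ξ + 1‖ ^ 2)) * (‖ξb - I‖ - ‖ξ - I‖) ^ 2)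
      (2 / (‖ξ‖ * ‖ξ - 1‖) * (1 / (‖ξ - 1‖ * ‖ξ + 1‖ ^ 2)) * (‖ξb - I‖ + ‖ξ - I‖) ^ 2) := by
    rw [hfac]
    refine norm_add_mul_sub_mem_Icc_of_norm_eq (by positivity) (by positivity) ?_ ?_ ?_ ?_
    · simp only [g₁, norm_div, norm_mul, norm_ofNat, hα, one_mul]; ring
    · simp only [g₂, ξb, norm_div, norm_mul, norm_ofNat, norm_conj, hsub, hβ, hγ, one_mul]; ring
    · simp only [h₁, norm_div, norm_mul, norm_pow]; ring
    · simp only [h₂, ξb, norm_div, norm_mul, norm_pow, norm_conj, hsub, hadd, hα, hβ, hγ,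
        one_mul]; ring
  have hconst : ∀ t : ℝ, 2 / (‖ξ‖ * ‖ξ - 1‖) * (1 / (‖ξ - 1‖ * ‖ξ + 1‖ ^ 2)) * t =
      2 * t / (‖ξ‖ * ‖ξ - 1‖ ^ 2 * ‖ξ + 1‖ ^ 2) := fun t => by ring
  obtain ⟨hlow, hup⟩ := hbounds
  rw [hconst] at hlow hup
  refine ⟨hlow, hup, fun hE => ?_⟩
  have hgap := sub_pos.mpr (norm_sub_I_lt_norm_conj_sub_I hξ)
  have hξ₀ := norm_pos_of_im_pos hξ
  have hξ₁ := norm_pos_of_im_pos (z := ξ - 1) (by simpa using hξ)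
  have hξ₂ := norm_pos_of_im_pos (z := ξ + 1) (by simpa using hξ)
  rw [hE, norm_zero] at hlow
  exact hlow.not_gt (by positivity)
end

section
/- Let ξ ∈ ℂ with Im ξ > 0, write ξ̄ = conj(ξ), and let α, β, γ ∈ ℂ with |α| = |β| = |γ| = 1. Set g₁ = (ξ - i)/(ξ(ξ - 1)), g₂ = (ξ̄ - i)/(ξ̄(ξ̄ - 1)), g₁' = -(ξ - i)/(ξ(ξ + 1)), g₂' = -(ξ̄ - i)/(ξ̄(ξ̄ + 1)), h₁ = (ξ - i)/(ξ(ξ - 1)(ξ + 1)), h₂ = (ξ̄ - i)/(ξ̄(ξ̄ - 1)(ξ̄ + 1)). Define E₁ := α·g₁·h₁ + β·γ·g₂·h₁ - conj(β)·conj(γ)·g₁·h₂ - conj(α)·g₂·h₂ and E₂ := α·g₁'·h₁ + β·γ·g₂'·h₁ - conj(β)·conj(γ)·g₁'·h₂ - conj(α)·g₂'·h₂. Then Im( conj(E₁)·E₂ ) > 0. -/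
/-!
Write `P = g₁ s₁`, `Q = g₂ s₂` with `s₁ = α h₁ - β̄ γ̄ h₂`, `s₂ = β γ h₁ - ᾱ h₂`, and
`r = (ξ - 1) / (ξ + 1)`. Then `E₁ = P + Q` and, since `g₁' = -g₁ r` and `g₂' = -g₂ r̄`,
`E₂ = -(P r + Q r̄)`, so `Im (Ē₁ E₂) = (|Q|² - |P|²) Im r`, the cross terms being real.
Now `Im r > 0`, `|s₁| = |s₂|` because `β γ s₁ = α s₂`, and `|g₁| < |g₂|` (and `|h₁| < |h₂|`, which
gives `s₁ ≠ 0`) because `|ξ - i| < |ξ + i| = |ξ̄ - i|` in the upper half-plane.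
-/

open Complex ComplexConjugate

theorem div_mul_eq_div_mul_mul_div {K : Type*} [Field K] (a : K) {b : K} (c d : K)
    (hb : b ≠ 0) : a / (c * d) = a / (c * b) * (b / d) := by
  rw [div_mul_eq_div_div, div_mul_eq_div_div, div_mul_div_cancel₀ hb]

namespace Complex

theorem norm_sub_I_lt_norm_add_I {z : ℂ} (hz : 0 < z.im) : ‖z - I‖ < ‖z + I‖ := by
  rw [norm_def, norm_def]
  refine Real.sqrt_lt_sqrt (normSq_nonneg _) ?_
  simp only [normSq_apply, sub_re, sub_im, add_re, add_im, I_re, I_im]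
  nlinarith

theorem norm_sub_I_div_lt_norm_conj_sub_I_div {z w : ℂ} (hz : 0 < z.im) (hw : w ≠ 0) :
    ‖(z - I) / w‖ < ‖(conj z - I) / conj w‖ := by
  have hconj : conj z - I = conj (z + I) := by simp [sub_eq_add_neg]
  rw [hconj, norm_div, norm_div, norm_conj, norm_conj]
  exact div_lt_div_of_pos_right (norm_sub_I_lt_norm_add_I hz) (norm_pos_iff.mpr hw)

theorem mul_sub_one_mul_add_one_ne_zero {z : ℂ} (hz : z.im ≠ 0) : z * (z - 1) * (z + 1) ≠ 0 := by
  refine mul_ne_zero (mul_ne_zero ?_ ?_) ?_ <;> intro h <;> apply hz <;>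
    simpa using congrArg im h

theorem im_sub_one_div_add_one_pos {z : ℂ} (hz : 0 < z.im) : 0 < ((z - 1) / (z + 1)).im := by
  have him : ((z - 1) / (z + 1)).im = 2 * z.im / normSq (z + 1) := by
    simp only [div_im, sub_im, sub_re, add_im, add_re, one_re, one_im]
    ring
  rw [him]
  exact div_pos (by linarith)
    (normSq_pos.mpr (right_ne_zero_of_mul (mul_sub_one_mul_add_one_ne_zero hz.ne')))

theorem mul_conj_eq_one_of_norm_eq_one_s14 {u : ℂ} (hu : ‖u‖ = 1) : u * conj u = 1 := by
  simp [mul_conj', hu]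

theorem norm_mul_sub_conj_mul_eq {α β γ : ℂ} (hα : ‖α‖ = 1) (hβ : ‖β‖ = 1) (hγ : ‖γ‖ = 1)
    (a b : ℂ) : ‖α * a - conj β * conj γ * b‖ = ‖β * γ * a - conj α * b‖ := by
  have key : β * γ * (α * a - conj β * conj γ * b) = α * (β * γ * a - conj α * b) := by
    linear_combination (-(γ * conj γ * b)) * mul_conj_eq_one_of_norm_eq_one_s14 hβ
      - b * mul_conj_eq_one_of_norm_eq_one_s14 hγ + b * mul_conj_eq_one_of_norm_eq_one_s14 hα
  simpa [norm_mul, hα, hβ, hγ] using congrArg norm key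

theorem mul_sub_mul_ne_zero {u v a b : ℂ} (hu : ‖u‖ = 1) (hv : ‖v‖ = 1) (hab : ‖a‖ ≠ ‖b‖) :
    u * a - v * b ≠ 0 := fun h => hab <| by
  simpa [norm_mul, hu, hv] using congrArg norm (sub_eq_zero.mp h)

theorem im_conj_add_mul_neg_add (p q r : ℂ) :
    (conj (p + q) * -(p * r + q * conj r)).im = (‖q‖ ^ 2 - ‖p‖ ^ 2) * r.im := by
  simp only [← normSq_eq_norm_sq, normSq_apply, mul_im, mul_re, neg_re, neg_im, add_im, add_re,
    conj_re, conj_im]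
  ring

theorem im_conj_mul_pos {g₁ g₂ s₁ s₂ r : ℂ} (hg : ‖g₁‖ < ‖g₂‖) (hs : ‖s₁‖ = ‖s₂‖)
    (hs₁ : s₁ ≠ 0) (hr : 0 < r.im) :
    0 < (conj (g₁ * s₁ + g₂ * s₂) * -(g₁ * s₁ * r + g₂ * s₂ * conj r)).im := by
  rw [im_conj_add_mul_neg_add, norm_mul, norm_mul, ← hs]
  refine mul_pos (sub_pos.mpr ?_) hr
  gcongr

end Complex

/-- The angle between the leading-order t-embedding increments of two consecutive
edges around a square face is strictly between `0` and `π`: the imaginary part of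
`conj(E₁)·E₂` is strictly positive. Here the data is built from
`G_{1,0}(w) = 1/(w-1)`, `G_{0,1}(w) = -1/(w+1)`, and `H(z) = 1/z`. -/
theorem stmt_14 (ξ α β γ : ℂ) (hξ : 0 < ξ.im)
    (hα : ‖α‖ = 1) (hβ : ‖β‖ = 1) (hγ : ‖γ‖ = 1) :
    let ξb : ℂ := starRingEnd ℂ ξ
    let g₁ : ℂ := (ξ - Complex.I) / (ξ * (ξ - 1))
    let g₂ : ℂ := (ξb - Complex.I) / (ξb * (ξb - 1))
    let g₁' : ℂ := -(ξ - Complex.I) / (ξ * (ξ + 1))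
    let g₂' : ℂ := -(ξb - Complex.I) / (ξb * (ξb + 1))
    let h₁ : ℂ := (ξ - Complex.I) / (ξ * (ξ - 1) * (ξ + 1))
    let h₂ : ℂ := (ξb - Complex.I) / (ξb * (ξb - 1) * (ξb + 1))
    let E₁ : ℂ := α * g₁ * h₁ + β * γ * g₂ * h₁ -
        (starRingEnd ℂ β) * (starRingEnd ℂ γ) * g₁ * h₂ - (starRingEnd ℂ α) * g₂ * h₂
    let E₂ : ℂ := α * g₁' * h₁ + β * γ * g₂' * h₁ -
        (starRingEnd ℂ β) * (starRingEnd ℂ γ) * g₁' * h₂ - (starRingEnd ℂ α) * g₂' * h₂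
    0 < ((starRingEnd ℂ E₁) * E₂).im := by
  intro ξb g₁ g₂ g₁' g₂' h₁ h₂ E₁ E₂
  have hw : ξ * (ξ - 1) * (ξ + 1) ≠ 0 := mul_sub_one_mul_add_one_ne_zero hξ.ne'
  have hwb : ξb * (ξb - 1) * (ξb + 1) ≠ 0 :=
    mul_sub_one_mul_add_one_ne_zero (by simpa [ξb] using hξ.ne')
  set s₁ := α * h₁ - conj β * conj γ * h₂
  set s₂ := β * γ * h₁ - conj α * h₂
  set r := (ξ - 1) / (ξ + 1)
  have hg₁' : g₁' = -(g₁ * r) := by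
    simp only [g₁', g₁, r]
    rw [neg_div, div_mul_eq_div_mul_mul_div _ _ _ (right_ne_zero_of_mul (left_ne_zero_of_mul hw))]
  have hg₂' : g₂' = -(g₂ * conj r) := by
    have hr : conj r = (ξb - 1) / (ξb + 1) := by simp [r, ξb, map_div₀]
    simp only [g₂', g₂, hr]
    rw [neg_div,
      div_mul_eq_div_mul_mul_div _ _ _ (right_ne_zero_of_mul (left_ne_zero_of_mul hwb))]
  have hE₁ : E₁ = g₁ * s₁ + g₂ * s₂ := by simp only [E₁, s₁, s₂]; ring
  have hE₂ : E₂ = -(g₁ * s₁ * r + g₂ * s₂ * conj r) := by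
    simp only [E₂, s₁, s₂, hg₁', hg₂']; ring
  have hg : ‖g₁‖ < ‖g₂‖ := by
    simpa only [map_mul, map_sub, map_one] using
      norm_sub_I_div_lt_norm_conj_sub_I_div hξ (left_ne_zero_of_mul hw)
  have hh : ‖h₁‖ < ‖h₂‖ := by
    simpa only [map_mul, map_sub, map_add, map_one] using
      norm_sub_I_div_lt_norm_conj_sub_I_div hξ hw
  rw [hE₁, hE₂]
  exact im_conj_mul_pos hg (norm_mul_sub_conj_mul_eq hα hβ hγ h₁ h₂)
    (mul_sub_mul_ne_zero hα (by simp [hβ, hγ]) hh.ne) (im_sub_one_div_add_one_pos hξ)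
end
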